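/- Let A be a finite dimensional algebra with no loop in its quiver. If every sincere A-module is faithful, then A is hereditary. -/

import Mathlib

open CategoryTheory Limits

noncomputable section

variable {A : Type} [Ring A]

/-- Vanishing of `Ext^n`. -/
def extZero (M N : ModuleCat.{0} A) (n : ℕ) : Prop :=
  Subsingleton (((Ext ℤ (ModuleCat.{0} A) n).obj (Opposite.op M)).obj N)

/-- `pd M ≤ n`, via vanishing of higher Ext. -/
def pdLE (M : ModuleCat.{0} A) (n : ℕ) : Prop :=
  ∀ (N : ModuleCat.{0} A) (m : ℕ), n < m → extZero M N m

/-- Projective dimension in `ℕ∞`. -/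
def projDim (M : ModuleCat.{0} A) : ℕ∞ :=
  sInf {d : ℕ∞ | ∃ n : ℕ, d = n ∧ pdLE M n}

/-- `N` is a direct summand of `M`. -/
def IsSummand (N M : ModuleCat.{0} A) : Prop :=
  ∃ L : ModuleCat.{0} A, Nonempty (M ≅ N ⊞ L)

/-- Indecomposable module. -/
def Indec (M : ModuleCat.{0} A) : Prop :=
  ¬ IsZero M ∧ ∀ N L : ModuleCat.{0} A, Nonempty (M ≅ N ⊞ L) → IsZero N ∨ IsZero L

/-- Setoid of indecomposable summands up to isomorphism. -/
def summandSetoid (M : ModuleCat.{0} A) :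
    Setoid {N : ModuleCat.{0} A // Indec N ∧ IsSummand N M} where
  r X Y := Nonempty (X.1 ≅ Y.1)
  iseqv := ⟨fun X => ⟨Iso.refl _⟩, fun ⟨e⟩ => ⟨e.symm⟩, fun ⟨e⟩ ⟨f⟩ => ⟨e.trans f⟩⟩

/-- `|M|`: number of pairwise non-isomorphic indecomposable direct summands. -/
def numIndec (M : ModuleCat.{0} A) : ℕ :=
  Nat.card (Quotient (summandSetoid M))

/-- `X` belongs to `Fac M`. -/
def InFac (M X : ModuleCat.{0} A) : Prop :=
  ∃ (n : ℕ) (f : (⨁ fun _ : Fin n => M) ⟶ X), Epi f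

/-- `X` belongs to `add M`. -/
def InAdd (M X : ModuleCat.{0} A) : Prop :=
  ∃ n : ℕ, IsSummand X (⨁ fun _ : Fin n => M)

/-- τ-rigidity, via the Auslander–Smalø criterion `Hom(M, τM) = 0 ↔ Ext¹(M, Fac M) = 0`. -/
def TauRigid (M : ModuleCat.{0} A) : Prop :=
  ∀ X : ModuleCat.{0} A, InFac M X → extZero M X 1

/-- τ-tilting module. -/
def TauTilting (M : ModuleCat.{0} A) : Prop :=
  TauRigid M ∧ numIndec M = numIndec (ModuleCat.of A A)

/-- Tilting module. -/
def IsTilting (M : ModuleCat.{0} A) : Prop :=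
  pdLE M 1 ∧ extZero M M 1 ∧ numIndec M = numIndec (ModuleCat.of A A)

/-- The quiver of `A` has no loop: `Ext¹(S,S) = 0` for every simple `S`. -/
def NoLoops (A : Type) [Ring A] : Prop :=
  ∀ S : ModuleCat.{0} A, Simple S → extZero S S 1

/-- Sincere module. -/
def Sincere (M : ModuleCat.{0} A) : Prop :=
  ∀ P : ModuleCat.{0} A, Projective P → ¬ IsZero P → ∃ f : P ⟶ M, f ≠ 0

/-- Faithful module: zero annihilator. -/
def FaithfulMod (M : ModuleCat.{0} A) : Prop :=
  ∀ a : A, (∀ m : M, a • m = 0) → a = 0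

/-- Hereditary: every module has projective dimension at most 1. -/
def Hereditary (A : Type) [Ring A] : Prop :=
  ∀ M : ModuleCat.{0} A, pdLE M 1

/-!
The module `A ⧸ J`, with `J` the Jacobson radical, is sincere, because every
nonzero projective `P` has a coordinate functional not landing in `J` (otherwise `P = J P`,
impossible as `J` is nilpotent). By hypothesis `A ⧸ J` is then faithful, so `J = 0` and the
Artinian ring `A` is semisimple. Every module is then projective, so `A` is hereditary.
-/

theorem Submodule.eq_bot_of_le_smul_of_isNilpotent {R M : Type*} [Ring R] [AddCommGroup M]
    [Module R M] {I : Ideal R} (hI : IsNilpotent I) {N : Submodule R M} (h : N ≤ I • N) :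
    N = ⊥ := by
  obtain ⟨n, hn⟩ := hI
  have hpow : ∀ k : ℕ, N ≤ I ^ k • N := by
    intro k
    induction k with
    | zero => rw [Submodule.pow_zero, Ideal.one_eq_top, Submodule.top_smul]
    | succ k ih =>
      calc N ≤ I ^ k • N := ih
        _ ≤ I ^ k • I • N := Submodule.smul_mono le_rfl h
        _ = I ^ (k + 1) • N := by rw [Submodule.pow_succ, Submodule.mul_smul]
  simpa [hn] using hpow n

theorem Module.Projective.top_le_smul_top {R P : Type*} [Ring R] [AddCommGroup P] [Module R P]
    [Module.Projective R P] {I : Ideal R} (h : ∀ (f : P →ₗ[R] R) (p : P), f p ∈ I) :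
    (⊤ : Submodule R P) ≤ I • ⊤ := by
  obtain ⟨s, hs⟩ := Module.projective_def'.mp ‹Module.Projective R P›
  intro p _
  have hp : Finsupp.linearCombination R id (s p) = p := LinearMap.congr_fun hs p
  rw [← hp, Finsupp.linearCombination_apply]
  exact Submodule.finsuppSum_mem _ _ _ _ fun i _ =>
    Submodule.smul_mem_smul (h (Finsupp.lapply i ∘ₗ s) p) Submodule.mem_top

theorem sincere_quotient_of_isNilpotent {I : Ideal A} (hI : IsNilpotent I) :
    Sincere (ModuleCat.of A (A ⧸ I)) := by
  intro P hP hPne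
  by_contra! hzero
  have : Module.Projective A P := (IsProjective.iff_projective P).mpr hP
  have hcoord (f : P →ₗ[A] A) (p : P) : f p ∈ I := by
    have hf := congrArg ModuleCat.Hom.hom (hzero (ModuleCat.ofHom (I.mkQ ∘ₗ f)))
    exact (Submodule.Quotient.mk_eq_zero I).mp (LinearMap.congr_fun hf p)
  have htop : (⊤ : Submodule A P) = ⊥ :=
    Submodule.eq_bot_of_le_smul_of_isNilpotent hI (Module.Projective.top_le_smul_top hcoord)
  have : Subsingleton P :=
    (Submodule.subsingleton_iff A).mp (subsingleton_iff_bot_eq_top.mp htop.symm)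
  exact hPne (ModuleCat.isZero_of_subsingleton P)

theorem eq_bot_of_faithfulMod_quotient {I : Ideal A} [I.IsTwoSided]
    (hI : FaithfulMod (ModuleCat.of A (A ⧸ I))) : I = ⊥ := by
  refine eq_bot_iff.mpr fun a ha => (Submodule.mem_bot A).mpr (hI a fun m => ?_)
  rw [← Ideal.annihilator_quotient (I := I)] at ha
  exact Module.mem_annihilator.mp ha m

theorem hereditary_of_isSemisimpleRing [IsSemisimpleRing A] : Hereditary A := by
  intro M N m hm
  obtain ⟨j, rfl⟩ : ∃ j, m = j + 1 := ⟨m - 1, by omega⟩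
  have : Projective M :=
    (IsProjective.iff_projective M).mp (Module.projective_of_isSemisimpleRing A M)
  exact ModuleCat.subsingleton_of_isZero (isZero_Ext_succ_of_projective M N j)

theorem stmt_12_general {k A : Type} [Field k] [Ring A] [Algebra k A]
    [FiniteDimensional k A]
    (h : ∀ M : ModuleCat.{0} A, Module.Finite A M → Sincere M → FaithfulMod M) :
    Hereditary A := by
  have : IsArtinianRing A := isArtinian_of_tower k inferInstance
  have hsincere := sincere_quotient_of_isNilpotent (IsSemiprimaryRing.isNilpotent (R := A))
  have hJ : Ring.jacobson A = ⊥ :=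
    eq_bot_of_faithfulMod_quotient (h _ inferInstance hsincere)
  have : IsSemisimpleRing A := IsArtinianRing.isSemisimpleRing_iff_jacobson.mpr hJ
  exact hereditary_of_isSemisimpleRing

theorem stmt_12 {k A : Type} [Field k] [IsAlgClosed k] [Ring A] [Algebra k A]
    [FiniteDimensional k A] (hloop : NoLoops A)
    (h : ∀ M : ModuleCat.{0} A, Module.Finite A M → Sincere M → FaithfulMod M) :
    Hereditary A :=
  stmt_12_general (k := k) h

end
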